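/- arXiv:1207.1464 — 5 statements merged into one kernel-verified Lean document; each statement's English description precedes it below -/
import Mathlib

section
/- Let k be a field of characteristic different from 2 and let n ≥ 2. Let x, y, z be n×n matrices over k of determinant 1 (elements of SL_n(k)) such that: x is an involution (x² = 1 and x ≠ 1); y is a unipotent element with quadratic minimal polynomial ((y − 1)² = 0 and y ≠ 1); and z is a regular unipotent element ((z − 1)^n = 0 and (z − 1)^(n−1) ≠ 0, i.e. z acts on kⁿ with a single Jordan block of size n with eigenvalue 1). Then x · y · z ≠ 1. -/
/-!
Write `x = y * z`. Since `(y - 1) ^ 2 = 0` we have `y⁻¹ = 2 - y`, so `(y * z) ^ 2 = 1` says that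
`u = y - 1` solves `u + z * u * z = 1 - z ^ 2`. With `N = z - 1` nilpotent, the operator
`d ↦ d + z * d * z` is `2` plus the nilpotent operator `d ↦ N * d + d * N + N * d * N`, hence
injective. Therefore `u` commutes with `z` (both `u` and `z * u * z⁻¹` solve the equation) and
`u * (1 + z ^ 2) = 1 - z ^ 2`. Squaring, `u ^ 2 = 0` forces `(1 - z ^ 2) ^ 2 = 0`, so `N ^ 2 = 0`
because `1 + z = 2 + N` is a unit; feeding `N ^ 2 = 0` back into the equation gives `y * z = 1`,
that is `x = 1`.
-/

section
variable {R : Type*} [Ring R]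

theorem injective_add_mul_mul_of_isNilpotent_sub_one (h2 : IsUnit (2 : R)) {z : R}
    (hz : IsNilpotent (z - 1)) : Function.Injective fun d : R => d + z * d * z := by
  set l := LinearMap.mulLeft ℤ (z - 1)
  set r := LinearMap.mulRight ℤ (z - 1)
  have hl : IsNilpotent l := (LinearMap.isNilpotent_mulLeft_iff ℤ _).mpr hz
  have hr : IsNilpotent r := (LinearMap.isNilpotent_mulRight_iff ℤ _).mpr hz
  have hlr : Commute l r := LinearMap.commute_mulLeft_right _ _
  have hT : IsNilpotent (l + r + l * r) :=
    ((Commute.refl l).mul_right hlr).add_left (hlr.symm.mul_right (Commute.refl r))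
      |>.isNilpotent_add (hlr.isNilpotent_add hl hr) (hlr.isNilpotent_mul_right hl)
  have hunit : IsUnit (2 + (l + r + l * r)) := by
    refine hT.isUnit_add_left_of_commute ?_ (Commute.ofNat_right _ 2)
    simpa only [map_ofNat] using h2.map (Algebra.lmul ℤ R)
  have hmap : ⇑(2 + (l + r + l * r)) = fun d : R => d + z * d * z := by
    ext d
    simp only [LinearMap.add_apply, Module.End.mul_apply, LinearMap.mulLeft_apply,
      LinearMap.mulRight_apply, l, r]
    rw [Module.End.ofNat_apply, two_nsmul]
    noncomm_ring
  exact hmap ▸ ((Module.End.isUnit_iff _).mp hunit).1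

theorem commute_of_add_mul_mul_eq (h2 : IsUnit (2 : R)) {z u c : R}
    (hz : IsNilpotent (z - 1)) (hu : u + z * u * z = c) (hc : Commute z c) : Commute z u := by
  refine sub_eq_zero.mp (injective_add_mul_mul_of_isNilpotent_sub_one h2 hz ?_)
  calc z * u - u * z + z * (z * u - u * z) * z = z * (u + z * u * z) - (u + z * u * z) * z := by
        noncomm_ring
    _ = 0 + z * 0 * z := by rw [hu, hc.eq, sub_self]; noncomm_ring

theorem sub_one_sq_eq_zero_of_one_sub_sq_sq_eq_zero (h2 : IsUnit (2 : R)) {z : R}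
    (hz : IsNilpotent (z - 1)) (h : (1 - z ^ 2) ^ 2 = 0) : (z - 1) ^ 2 = 0 := by
  have hunit : IsUnit ((z + 1) ^ 2) := by
    have := hz.isUnit_add_left_of_commute h2 (Commute.ofNat_right _ 2)
    rw [show 2 + (z - 1) = z + 1 by rw [← one_add_one_eq_two]; noncomm_ring] at this
    exact this.pow 2
  refine hunit.mul_left_eq_zero.mp ?_
  rw [← h]
  noncomm_ring

theorem mul_eq_one_of_mul_sq_eq_one (h2 : IsUnit (2 : R)) {y z : R} (hy : (y - 1) ^ 2 = 0)
    (hz : IsNilpotent (z - 1)) (hyz : (y * z) ^ 2 = 1) : y * z = 1 := by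
  have hy_inv : (2 - y) * y = 1 := by
    rw [← sub_eq_zero, ← neg_eq_zero, ← hy]
    noncomm_ring
  have hzyz : z * y * z = 2 - y := by
    calc z * y * z = (2 - y) * y * (z * y * z) := by rw [hy_inv, one_mul]
      _ = (2 - y) * (y * z) ^ 2 := by noncomm_ring
      _ = 2 - y := by rw [hyz, mul_one]
  have hL : (y - 1) + z * (y - 1) * z = 1 - z ^ 2 := by
    calc (y - 1) + z * (y - 1) * z = y - 1 + z * y * z - z ^ 2 := by noncomm_ring
      _ = 1 - z ^ 2 := by rw [hzyz, ← one_add_one_eq_two]; noncomm_ring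
  have hcomm : Commute z (y - 1) := commute_of_add_mul_mul_eq h2 hz hL
    ((Commute.one_right z).sub_right ((Commute.refl z).pow_right 2))
  have hu : (y - 1) * (1 + z ^ 2) = 1 - z ^ 2 := by
    rw [← hL, hcomm.eq]
    noncomm_ring
  have hz2 : (z - 1) ^ 2 = 0 := by
    refine sub_one_sq_eq_zero_of_one_sub_sq_sq_eq_zero h2 hz ?_
    rw [← hu, ((Commute.one_right _).add_right (hcomm.symm.pow_right 2)).mul_pow, hy, zero_mul]
  refine sub_eq_zero.mp (h2.mul_right_eq_zero.mp ?_)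
  calc 2 * (y * z - 1) = ((y - 1) * (1 + z ^ 2) - (1 - z ^ 2)) - y * (z - 1) ^ 2 := by noncomm_ring
    _ = 0 := by rw [hu, hz2]; noncomm_ring

end

theorem stmt_0_general (k : Type*) [Field k] (hchar : ringChar k ≠ 2)
    (n : ℕ)
    (x y z : Matrix (Fin n) (Fin n) k)
    (hx2 : x ^ 2 = 1) (hx1 : x ≠ 1)
    (hy2 : (y - 1) ^ 2 = 0)
    (hzn : (z - 1) ^ n = 0) :
    x * y * z ≠ 1 := by
  intro h
  have h2 : IsUnit (2 : Matrix (Fin n) (Fin n) k) := by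
    simpa only [map_ofNat] using
      (isUnit_iff_ne_zero.mpr (Ring.two_ne_zero hchar)).map (algebraMap k _)
  have hx : x = y * z := left_inv_eq_right_inv (by rwa [sq] at hx2) (by rwa [mul_assoc] at h)
  exact hx1 (hx.trans (mul_eq_one_of_mul_sq_eq_one h2 hy2 ⟨n, hzn⟩ (hx ▸ hx2)))

/-- Lemma (Guralnick–Malle, Lemma `sl`): in `SL_n(k)`, `char k ≠ 2`, an involution `x`,
a quadratic unipotent `y` and a regular unipotent `z` never satisfy `x * y * z = 1`. -/
theorem stmt_0 (k : Type*) [Field k] (hchar : ringChar k ≠ 2)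
    (n : ℕ) (hn : 2 ≤ n)
    (x y z : Matrix (Fin n) (Fin n) k)
    (hxdet : x.det = 1) (hydet : y.det = 1) (hzdet : z.det = 1)
    (hx2 : x ^ 2 = 1) (hx1 : x ≠ 1)
    (hy2 : (y - 1) ^ 2 = 0) (hy1 : y ≠ 1)
    (hzn : (z - 1) ^ n = 0) (hzreg : (z - 1) ^ (n - 1) ≠ 0) :
    x * y * z ≠ 1 :=
  stmt_0_general k hchar n x y z hx2 hx1 hy2 hzn
end

section
/- Let k be a field of characteristic different from 2, let m ≥ 2, and let V be a 2m-dimensional k-vector space equipped with a nondegenerate symmetric bilinear form B. Let x, y, z be linear automorphisms of V of determinant 1 that preserve B (that is, B(g u, g v) = B(u, v) for all u, v ∈ V and g ∈ {x, y, z}), so that x, y, z lie in the special orthogonal group SO(V, B) ≅ SO_{2m}(k). Assume: x is an involution (x² = 1 and x ≠ 1); y is unipotent with quadratic minimal polynomial ((y − 1)² = 0 and y ≠ 1); and z is regular unipotent, i.e. z − 1 is nilpotent and (z − 1)^(2m−2) ≠ 0 (for an element of SO(V, B) this says that z has Jordan type (2m−1, 1)). Then x · y · z ≠ 1. -/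
/-!
Write `x = y z`, so `(y z)² = 1`. Since `(y - 1)² = 0`, the inverse of `y` is `2 - y`, hence
`z y z + y = 2`. Putting `N = z - 1` and `d = z y - y z` gives `z d z + d = 0`, that is
`d (z + 1) = -N d z`; iterating, `d (z + 1)ⁿ = (-N)ⁿ d zⁿ`, which vanishes for large `n`, and
`z + 1 = 2 + N` is a unit as `char k ≠ 2`. So `y` commutes with `z` and `(z² + 1) y = 2`, i.e.
`y - 1` is the Cayley transform `(1 - z²)(1 + z²)⁻¹`. Squaring, `(z - 1)² (z + 1)² = 0`, so
`(z - 1)² = 0`, which contradicts `(z - 1)^(2m - 2) ≠ 0` as soon as `m ≥ 2`.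
-/

section Ring

variable {R : Type*} [Ring R]

theorem mul_pow_eq_pow_mul_mul_pow {a b c d : R} (hac : Commute a c)
    (h : d * a = b * d * c) (n : ℕ) : d * a ^ n = b ^ n * d * c ^ n := by
  induction n with
  | zero => simp
  | succ n ih =>
    calc d * a ^ (n + 1) = b ^ n * d * (c ^ n * a) := by
          rw [pow_succ, ← mul_assoc, ih, mul_assoc _ (c ^ n)]
      _ = b ^ n * (d * a) * c ^ n := by
          rw [← (hac.pow_right n).eq]; simp only [mul_assoc]
      _ = b ^ (n + 1) * d * c ^ (n + 1) := by
          rw [h, pow_succ b, pow_succ' c]; simp only [mul_assoc]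

theorem eq_zero_of_mul_mul_eq_neg {z d : R} (hz : IsNilpotent (z - 1)) (hz1 : IsUnit (z + 1))
    (h : z * d * z = -d) : d = 0 := by
  obtain ⟨s, hs⟩ := hz
  have hstep : d * (z + 1) = -(z - 1) * d * z := by
    rw [show -(z - 1) * d * z = -(z * d * z) + d * z by noncomm_ring, h, neg_neg]; noncomm_ring
  have hcomm : Commute (z + 1) z := (Commute.refl z).add_left (Commute.one_left z)
  have hvanish : d * (z + 1) ^ s = 0 := by
    rw [mul_pow_eq_pow_mul_mul_pow hcomm hstep, neg_pow, hs, mul_zero, zero_mul, zero_mul]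
  exact (hz1.pow s).mul_left_eq_zero.mp hvanish

theorem commute_of_mul_mul_add_eq_two {y z : R} (hz : IsNilpotent (z - 1))
    (hz1 : IsUnit (z + 1)) (h : z * y * z + y = 2) : Commute z y := by
  refine sub_eq_zero.mp (eq_zero_of_mul_mul_eq_neg hz hz1 ?_)
  calc z * (z * y - y * z) * z
        = z * (z * y * z + y) - (z * y * z + y) * z - (z * y - y * z) := by noncomm_ring
    _ = -(z * y - y * z) := by rw [h]; noncomm_ring

theorem sub_one_sq_eq_zero_of_mul_sq_eq_one {y z : R} (hz : IsNilpotent (z - 1))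
    (hz1 : IsUnit (z + 1)) (hy : (y - 1) ^ 2 = 0) (hyz : (y * z) ^ 2 = 1) :
    (z - 1) ^ 2 = 0 := by
  have hinv : (2 - y) * y = 1 := by
    calc (2 - y) * y = 1 - (y - 1) ^ 2 := by noncomm_ring
      _ = 1 := by rw [hy, sub_zero]
  have hzyz : z * y * z + y = 2 := by
    have : z * y * z = 2 - y := by
      calc z * y * z = ((2 - y) * y) * (z * y * z) := by rw [hinv, one_mul]
        _ = (2 - y) * (y * z) ^ 2 := by noncomm_ring
        _ = 2 - y := by rw [hyz, mul_one]
    rw [this, sub_add_cancel]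
  have hcomm : Commute z y := commute_of_mul_mul_add_eq_two hz hz1 hzyz
  have hzy : z * y * z = z ^ 2 * y := by rw [mul_assoc, ← hcomm.eq, ← mul_assoc, sq]
  have hcayley : (z ^ 2 + 1) * (y - 1) = 1 - z ^ 2 := by
    calc (z ^ 2 + 1) * (y - 1) = (z ^ 2 * y + y) - z ^ 2 - 1 := by noncomm_ring
      _ = 1 - z ^ 2 := by rw [← hzy, hzyz, ← one_add_one_eq_two]; abel
  have hsq : (z - 1) ^ 2 * (z + 1) ^ 2 = 0 := by
    calc (z - 1) ^ 2 * (z + 1) ^ 2 = (1 - z ^ 2) ^ 2 := by noncomm_ring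
      _ = (z ^ 2 + 1) ^ 2 * (y - 1) ^ 2 := by
          rw [← (((hcomm.pow_left 2).add_left (Commute.one_left y)).sub_right
            (Commute.one_right _)).mul_pow, hcayley]
      _ = 0 := by rw [hy, mul_zero]
  exact (hz1.pow 2).mul_left_eq_zero.mp hsq

end Ring

theorem stmt_1_general (k : Type*) [Field k] (hchar : ringChar k ≠ 2)
    (m : ℕ) (hm : 2 ≤ m)
    (V : Type*) [AddCommGroup V] [Module k V]
    (x y z : Module.End k V)
    (hx2 : x ^ 2 = 1)
    (hy2 : (y - 1) ^ 2 = 0)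
    (hznil : IsNilpotent (z - 1)) (hzreg : (z - 1) ^ (2 * m - 2) ≠ 0) :
    x * y * z ≠ 1 := by
  intro hxyz
  have hx : x = y * z := by
    calc x = x ^ 2 * (y * z) := by rw [sq, mul_assoc, ← mul_assoc x y z, hxyz, mul_one]
      _ = y * z := by rw [hx2, one_mul]
  have htwo : IsUnit (2 : Module.End k V) := by
    have h := (isUnit_iff_ne_zero.mpr (Ring.two_ne_zero hchar)).map (algebraMap k (Module.End k V))
    rwa [map_ofNat] at h
  have hz1 : IsUnit (z + 1) := by
    have h := hznil.isUnit_add_left_of_commute htwo (Commute.ofNat_right _ 2)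
    rwa [show 2 + (z - 1) = z + 1 by rw [← one_add_one_eq_two]; abel] at h
  have hsq := sub_one_sq_eq_zero_of_mul_sq_eq_one hznil hz1 hy2 (hx ▸ hx2)
  apply hzreg
  rw [show 2 * m - 2 = 2 + (2 * m - 4) by omega, pow_add, hsq, zero_mul]

/-- Lemma (Guralnick–Malle, Lemma `so`): in `SO_{2m}(k)`, `char k ≠ 2`, `m ≥ 2`,
an involution `x`, a quadratic unipotent `y` and a regular unipotent `z`
never satisfy `x * y * z = 1`. -/
theorem stmt_1 (k : Type*) [Field k] (hchar : ringChar k ≠ 2)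
    (m : ℕ) (hm : 2 ≤ m)
    (V : Type*) [AddCommGroup V] [Module k V] [FiniteDimensional k V]
    (hdim : Module.finrank k V = 2 * m)
    (B : LinearMap.BilinForm k V)
    (hBsymm : ∀ u v : V, B u v = B v u)
    (hBnd : B.Nondegenerate)
    (x y z : Module.End k V)
    (hxu : IsUnit x) (hyu : IsUnit y) (hzu : IsUnit z)
    (hxdet : LinearMap.det x = 1) (hydet : LinearMap.det y = 1)
    (hzdet : LinearMap.det z = 1)
    (hxB : ∀ u v : V, B (x u) (x v) = B u v)
    (hyB : ∀ u v : V, B (y u) (y v) = B u v)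
    (hzB : ∀ u v : V, B (z u) (z v) = B u v)
    (hx2 : x ^ 2 = 1) (hx1 : x ≠ 1)
    (hy2 : (y - 1) ^ 2 = 0) (hy1 : y ≠ 1)
    (hznil : IsNilpotent (z - 1)) (hzreg : (z - 1) ^ (2 * m - 2) ≠ 0) :
    x * y * z ≠ 1 :=
  stmt_1_general k hchar m hm V x y z hx2 hy2 hznil hzreg
end

section
/- Let k be a field of characteristic different from 2 and let V be a 14-dimensional k-vector space. Let x, y, z be linear automorphisms of V such that x · y · z = 1. Assume: x² = 1 and the (−1)-eigenspace of x on V has dimension at most 4 or at least 8 (this holds for the action on the natural 14-dimensional module of any involution of the spin group Spin_14(k)); the fixed space ker(y − 1) has dimension at least 8; and z is unipotent (z − 1 is nilpotent) with dim ker(z − 1) = 2 (this holds for regular unipotent elements of SO_14(k), which have Jordan type (13, 1)). Then one obtains a contradiction; that is, no such triple x, y, z with x y z = 1 exists. -/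
/-- Lemma (Guralnick–Malle, Lemma `spin14`), linear-algebra content:
on a 14-dimensional space over a field of characteristic ≠ 2 there is no triple
`x, y, z` with `x * y * z = 1` where `x` is an involution whose `(-1)`-eigenspace
has dimension `≤ 4` or `≥ 8`, `y` has fixed space of dimension `≥ 8`, and `z` is
unipotent with 2-dimensional fixed space. -/
theorem stmt_2 (k : Type*) [Field k] (hchar : ringChar k ≠ 2)
    (V : Type*) [AddCommGroup V] [Module k V] [FiniteDimensional k V]
    (hdim : Module.finrank k V = 14)
    (x y z : Module.End k V)
    (hxu : IsUnit x) (hyu : IsUnit y) (hzu : IsUnit z)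
    (hxyz : x * y * z = 1)
    (hx2 : x ^ 2 = 1)
    (hxeig : Module.finrank k (Module.End.eigenspace x (-1)) ≤ 4 ∨
      8 ≤ Module.finrank k (Module.End.eigenspace x (-1)))
    (hyfix : 8 ≤ Module.finrank k (LinearMap.ker (y - 1)))
    (hznil : IsNilpotent (z - 1))
    (hzfix : Module.finrank k (LinearMap.ker (z - 1)) = 2) :
    False := by
  have hxinj : Function.Injective x := ((Module.End.isUnit_iff x).mp hxu).injective
  have hyinj : Function.Injective y := ((Module.End.isUnit_iff y).mp hyu).injective
  have happly : ∀ v : V, x (y (z v)) = v := by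
    intro v
    have := congrArg (fun f : Module.End k V => f v) hxyz
    simpa [Module.End.mul_apply] using this
  -- membership in the eigenspace at -1 means `x v = -v`
  have heig : ∀ v : V, v ∈ Module.End.eigenspace x (-1) ↔ x v = -v := by
    intro v
    rw [Module.End.mem_eigenspace_iff, neg_smul, one_smul]
  rcases hxeig with hxeig | hxeig
  · -- case 1 : fixed space of x is large
    -- eigenspace x (-1) = ker (x+1)
    have hkereq : Module.End.eigenspace x (-1) = LinearMap.ker (x + 1) := by
      ext v
      rw [heig v, LinearMap.mem_ker, LinearMap.add_apply, Module.End.one_apply]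
      constructor
      · intro h; rw [h]; simp
      · intro h; exact eq_neg_of_add_eq_zero_left h
    -- range (x+1) ≤ ker (x-1)
    have hmul0 : (x - 1) * (x + 1) = 0 := by
      have : (x - 1) * (x + 1) = x ^ 2 - 1 := by noncomm_ring
      rw [this, hx2, sub_self]
    have hrange : LinearMap.range (x + 1) ≤ LinearMap.ker (x - 1) := by
      rintro v ⟨u, rfl⟩
      rw [LinearMap.mem_ker, ← Module.End.mul_apply, hmul0]
      simp
    have hrn : Module.finrank k (LinearMap.range (x + 1))
        + Module.finrank k (LinearMap.ker (x + 1)) = 14 := by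
      rw [LinearMap.finrank_range_add_finrank_ker, hdim]
    have hAx : 10 ≤ Module.finrank k (LinearMap.ker (x - 1)) := by
      have h1 := Submodule.finrank_mono hrange
      rw [hkereq] at hxeig
      omega
    -- Fix x ⊓ Fix y ≤ ker (z - 1)
    have hsub : LinearMap.ker (x - 1) ⊓ LinearMap.ker (y - 1) ≤ LinearMap.ker (z - 1) := by
      rintro v ⟨hvx, hvy⟩
      have hvx' : x v = v := by
        have := LinearMap.mem_ker.mp hvx
        simpa [LinearMap.sub_apply, sub_eq_zero] using this
      have hvy' : y v = v := by
        have := LinearMap.mem_ker.mp hvy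
        simpa [LinearMap.sub_apply, sub_eq_zero] using this
      have : x (y (z v)) = x (y v) := by rw [happly v, hvy', hvx']
      have hz : z v = v := hyinj (hxinj this)
      rw [LinearMap.mem_ker]
      simp [LinearMap.sub_apply, hz]
    have hdimle : Module.finrank k (LinearMap.ker (x - 1) ⊓ LinearMap.ker (y - 1) : Submodule k V)
        ≤ 2 := hzfix ▸ Submodule.finrank_mono hsub
    have hsup := Submodule.finrank_sup_add_finrank_inf_eq
      (LinearMap.ker (x - 1)) (LinearMap.ker (y - 1))
    have hsuple : Module.finrank k
        (LinearMap.ker (x - 1) ⊔ LinearMap.ker (y - 1) : Submodule k V) ≤ 14 :=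
      hdim ▸ Submodule.finrank_le _
    omega
  · -- case 2 : (-1)-eigenspace of x is large
    set C := Module.End.eigenspace x (-1) with hC
    set B := LinearMap.ker (y - 1) with hB
    have hsup := Submodule.finrank_sup_add_finrank_inf_eq C B
    have hsuple : Module.finrank k (C ⊔ B : Submodule k V) ≤ 14 :=
      hdim ▸ Submodule.finrank_le _
    have hinf : 2 ≤ Module.finrank k (C ⊓ B : Submodule k V) := by omega
    have hne : (C ⊓ B : Submodule k V) ≠ ⊥ := by
      intro h
      rw [h, finrank_bot] at hinf
      omega
    obtain ⟨v, hv, hv0⟩ := Submodule.exists_mem_ne_zero_of_ne_bot hne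
    obtain ⟨hvC, hvB⟩ := hv
    have hvx : x v = -v := (heig v).mp hvC
    have hvy : y v = v := by
      have := LinearMap.mem_ker.mp hvB
      simpa [LinearMap.sub_apply, sub_eq_zero] using this
    have hzv : z v = -v := by
      have h1 : x (y (z v)) = x (y (-v)) := by
        rw [happly v, map_neg, hvy, map_neg, hvx, neg_neg]
      exact hyinj (hxinj h1)
    have hzm : (z - 1) v = (-2 : k) • v := by
      rw [LinearMap.sub_apply, Module.End.one_apply, hzv]
      rw [neg_smul, two_smul]
      abel
    have hpow : ∀ n : ℕ, ((z - 1) ^ n) v = ((-2 : k) ^ n) • v := by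
      intro n
      induction n with
      | zero => simp
      | succ n ih =>
        rw [pow_succ, Module.End.mul_apply, hzm, map_smul, ih, smul_smul, ← pow_succ']
    obtain ⟨n, hn⟩ := hznil
    have h0 : ((-2 : k) ^ n) • v = 0 := by rw [← hpow n, hn]; simp
    have h2 : (-2 : k) ≠ 0 := neg_ne_zero.mpr (Ring.two_ne_zero hchar)
    have := smul_eq_zero.mp h0
    rcases this with h | h
    · exact pow_ne_zero n h2 h
    · exact hv0 h
end

section
/- Let k be a field of characteristic 2 and let u be an element of order exactly 8 in the symplectic group Sp_6(k), the group of invertible 6×6 matrices g over k satisfying gᵀ J g = J for the standard nondegenerate alternating form J on k⁶. Then (u − 1)^5 ≠ 0; that is, u is a regular unipotent element of Sp_6(k), acting on k⁶ with a single Jordan block of size 6 with eigenvalue 1. -/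
open Matrix

lemma aux_rank_two {K : Type*} [Field K] {n : Type*} [Fintype n] [DecidableEq n]
    (A : Matrix n n K) (hsymm : Aᵀ = A) (hdiag : ∀ i, A i i = 0) (hA : A ≠ 0) :
    2 ≤ A.rank := by
  -- find nonzero entry
  obtain ⟨i, j, hij⟩ : ∃ i j, A i j ≠ 0 := by
    by_contra h
    push_neg at h
    exact hA (by ext i j; simp [h])
  have hji : A j i = A i j := by conv_lhs => rw [← hsymm, transpose_apply]
  -- columns i and j are independent
  set c1 : n → K := A.mulVecLin (Pi.single i 1) with hc1
  set c2 : n → K := A.mulVecLin (Pi.single j 1) with hc2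
  have hc1v : ∀ r, c1 r = A r i := by intro r; simp [hc1, mulVecLin_apply, mulVec_single]
  have hc2v : ∀ r, c2 r = A r j := by intro r; simp [hc2, mulVecLin_apply, mulVec_single]
  have hind : LinearIndependent K ![c1, c2] := by
    rw [LinearIndependent.pair_iff]
    intro s t hst
    have hi : s * A i i + t * A i j = 0 := by
      have := congrFun hst i
      simpa [hc1v, hc2v] using this
    have hj : s * A j i + t * A j j = 0 := by
      have := congrFun hst j
      simpa [hc1v, hc2v] using this
    rw [hdiag, mul_zero, zero_add] at hi
    rw [hdiag, mul_zero, add_zero, hji] at hj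
    exact ⟨by rcases mul_eq_zero.mp hj with h|h; exacts [h, absurd h hij],
           by rcases mul_eq_zero.mp hi with h|h; exacts [h, absurd h hij]⟩
  have hspan : Submodule.span K (Set.range ![c1, c2]) ≤ LinearMap.range A.mulVecLin := by
    rw [Submodule.span_le]
    rintro x ⟨r, rfl⟩
    fin_cases r
    · exact ⟨Pi.single i 1, rfl⟩
    · exact ⟨Pi.single j 1, rfl⟩
  have h2 : Module.finrank K (Submodule.span K (Set.range ![c1, c2])) = 2 := by
    rw [finrank_span_eq_card hind]
    simp
  calc (2 : ℕ) = Module.finrank K (Submodule.span K (Set.range ![c1, c2])) := h2.symm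
    _ ≤ Module.finrank K (LinearMap.range A.mulVecLin) := Submodule.finrank_mono hspan
    _ = A.rank := rfl
open Matrix

-- aux: stabilization of ranges of powers
lemma aux_stab {K V : Type*} [Field K] [AddCommGroup V] [Module K V] [FiniteDimensional K V]
    (f : Module.End K V) (i : ℕ)
    (h : Module.finrank K (LinearMap.range (f ^ (i+1))) = Module.finrank K (LinearMap.range (f ^ i)))
    (j : ℕ) (hj : i ≤ j) : LinearMap.range (f ^ j) = LinearMap.range (f ^ i) := by
  have hle : LinearMap.range (f ^ (i+1)) ≤ LinearMap.range (f ^ i) := by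
    rw [pow_succ]
    exact LinearMap.range_comp_le_range f (f ^ i)
  have heq : LinearMap.range (f ^ (i+1)) = LinearMap.range (f ^ i) :=
    Submodule.eq_of_le_of_finrank_eq hle h
  induction j, hj using Nat.le_induction with
  | base => rfl
  | succ j hj ih =>
    have h1 : LinearMap.range (f ^ (j+1)) = Submodule.map f (LinearMap.range (f ^ j)) := by
      rw [pow_succ']
      exact LinearMap.range_comp (f ^ j) f
    have h2 : LinearMap.range (f ^ (i+1)) = Submodule.map f (LinearMap.range (f ^ i)) := by
      rw [pow_succ']
      exact LinearMap.range_comp (f ^ i) f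
    rw [h1, ih, ← h2, heq]
open Matrix

/-- In characteristic 2, any element of order exactly 8 of the symplectic group
`Sp_6(k)` is regular unipotent, i.e. has a single Jordan block of size 6 on `k⁶`:
`(u - 1)^5 ≠ 0`. -/
theorem stmt_3 (k : Type*) [Field k] [CharP k 2]
    (u : Matrix.symplecticGroup (Fin 3) k)
    (hu : orderOf u = 8) :
    ((u : Matrix ((Fin 3) ⊕ (Fin 3)) ((Fin 3) ⊕ (Fin 3)) k) - 1) ^ 5 ≠ 0 := by
  intro h5
  set U : Matrix ((Fin 3) ⊕ (Fin 3)) ((Fin 3) ⊕ (Fin 3)) k := (u : Matrix ((Fin 3) ⊕ (Fin 3)) ((Fin 3) ⊕ (Fin 3)) k) with hUdef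
  set Jm : Matrix ((Fin 3) ⊕ (Fin 3)) ((Fin 3) ⊕ (Fin 3)) k := Matrix.J (Fin 3) k with hJdef
  set N : Matrix ((Fin 3) ⊕ (Fin 3)) ((Fin 3) ⊕ (Fin 3)) k := U - 1 with hNdef
  have hneg : ∀ (B : Matrix ((Fin 3) ⊕ (Fin 3)) ((Fin 3) ⊕ (Fin 3)) k), -B = B := by
    intro B; ext i j; exact CharTwo.neg_eq _
  have hJJ : Jm * Jm = 1 := by
    rw [hJdef, Matrix.J_squared]; exact hneg 1
  have hJJ1 : ∀ X : Matrix ((Fin 3) ⊕ (Fin 3)) ((Fin 3) ⊕ (Fin 3)) k, Jm * (Jm * X) = X := by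
    intro X; rw [← Matrix.mul_assoc, hJJ, Matrix.one_mul]
  have hquad : ∀ (P : Matrix ((Fin 3) ⊕ (Fin 3)) ((Fin 3) ⊕ (Fin 3)) k) i,
      (Pᵀ * Jm * P) i i = 0 := by
    intro P i
    rw [hJdef]
    simp [Matrix.mul_apply, Matrix.J, Matrix.fromBlocks, Fintype.sum_sum_type,
      Finset.sum_mul, Finset.mul_sum, Matrix.one_apply, mul_comm]
  have hu4 : u ^ 4 ≠ 1 := by
    intro h
    have := orderOf_dvd_of_pow_eq_one h
    rw [hu] at this
    norm_num at this
  have hU4 : U ^ 4 ≠ 1 := by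
    intro h
    exact hu4 (Subtype.ext (by push_cast; exact h))
  have hN4 : N ^ 4 = U ^ 4 - 1 := by
    have h2 : (U - 1) ^ 2 ^ 2 = U ^ 2 ^ 2 - 1 ^ 2 ^ 2 :=
      sub_pow_char_pow_of_commute 2 2 (Commute.one_right U)
    norm_num at h2
    rw [hNdef, h2]
  have hN4ne : N ^ 4 ≠ 0 := by
    rw [hN4]
    intro h
    exact hU4 (by rwa [sub_eq_zero] at h)
  set V : Matrix ((Fin 3) ⊕ (Fin 3)) ((Fin 3) ⊕ (Fin 3)) k :=
    ((u⁻¹ : Matrix.symplecticGroup (Fin 3) k) : Matrix ((Fin 3) ⊕ (Fin 3)) ((Fin 3) ⊕ (Fin 3)) k) with hVdef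
  have hUV : U * V = 1 := by
    rw [hUdef, hVdef, ← Submonoid.coe_mul, mul_inv_cancel, OneMemClass.coe_one]
  have hVU : V * U = 1 := by
    rw [hUdef, hVdef, ← Submonoid.coe_mul, inv_mul_cancel, OneMemClass.coe_one]
  have hUV1 : ∀ X : Matrix ((Fin 3) ⊕ (Fin 3)) ((Fin 3) ⊕ (Fin 3)) k, U * (V * X) = X := by
    intro X; rw [← Matrix.mul_assoc, hUV, Matrix.one_mul]
  have hmem : U * Jm * Uᵀ = Jm := (SymplecticGroup.mem_iff).mp u.2
  have hUT : Uᵀ = Jm * V * Jm := by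
    have h1 : Jm * Uᵀ = V * Jm := by
      calc Jm * Uᵀ = (V * U) * (Jm * Uᵀ) := by rw [hVU, one_mul]
        _ = V * (U * Jm * Uᵀ) := by simp only [Matrix.mul_assoc]
        _ = V * Jm := by rw [hmem]
    calc Uᵀ = (Jm * Jm) * Uᵀ := by rw [hJJ, one_mul]
      _ = Jm * (Jm * Uᵀ) := by rw [Matrix.mul_assoc]
      _ = Jm * (V * Jm) := by rw [h1]
      _ = Jm * V * Jm := by rw [Matrix.mul_assoc]
  have hVN : V * N = V - 1 := by
    rw [hNdef, Matrix.mul_sub, Matrix.mul_one, hVU, ← neg_sub, hneg]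
  have hNV : N * V = V * N := by
    rw [hNdef, Matrix.sub_mul, Matrix.one_mul, hUV, hVN, ← neg_sub, hneg]
  have hNV1 : ∀ X : Matrix ((Fin 3) ⊕ (Fin 3)) ((Fin 3) ⊕ (Fin 3)) k,
      N * (V * X) = V * (N * X) := by
    intro X; rw [← Matrix.mul_assoc, hNV, Matrix.mul_assoc]
  have hNT : Nᵀ = Jm * (V * N) * Jm := by
    rw [hVN]
    have h2 : Jm * (V - 1) * Jm = Jm * V * Jm - Jm * Jm := by
      rw [Matrix.mul_sub, Matrix.mul_one, Matrix.sub_mul]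
    rw [h2, hJJ, hNdef, transpose_sub, transpose_one, hUT]
  have hpow4 : N ^ 4 = N * (N * (N * N)) := by
    rw [pow_succ, pow_succ, pow_succ, pow_one]
    simp only [Matrix.mul_assoc]
  set B : Matrix ((Fin 3) ⊕ (Fin 3)) ((Fin 3) ⊕ (Fin 3)) k :=
    (N * N)ᵀ * Jm * (N * N) with hBdef
  have hBkey : B = Jm * (V * (V * (N ^ 4))) := by
    rw [hBdef, hpow4, transpose_mul, hNT]
    simp only [Matrix.mul_assoc]
    rw [hJJ1, hJJ1, hNV1]
  have hNB : N ^ 4 = U * (U * (Jm * B)) := by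
    rw [hBkey, hJJ1, hUV1, hUV1]
  have hJT : Jmᵀ = Jm := by
    rw [hJdef, Matrix.J_transpose, ← hJdef]
    exact hneg Jm
  have hBsymm : Bᵀ = B := by
    have h1 : Bᵀ = (N * N)ᵀ * (Jmᵀ * (N * N)) := by
      rw [hBdef]
      simp only [transpose_mul, transpose_transpose, Matrix.mul_assoc]
    rw [h1, hJT, hBdef, Matrix.mul_assoc]
  have hBdiag : ∀ i, B i i = 0 := by
    intro i
    rw [hBdef]
    exact hquad (N * N) i
  have hBne : B ≠ 0 := by
    intro h
    rw [h, Matrix.mul_zero, Matrix.mul_zero, Matrix.mul_zero] at hNB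
    exact hN4ne hNB
  have hrankeq : (N ^ 4).rank = B.rank := by
    have hNB' : N ^ 4 = (U * (U * Jm)) * B := by
      rw [hNB]; simp only [Matrix.mul_assoc]
    rw [hNB']
    apply Matrix.rank_mul_eq_right_of_isUnit_det
    have hdu : IsUnit U.det := SymplecticGroup.symplectic_det u.2
    rw [Matrix.det_mul, Matrix.det_mul]
    exact hdu.mul (hdu.mul (by rw [hJdef]; exact Matrix.isUnit_det_J (Fin 3) k))
  have hr4 : 2 ≤ (N ^ 4).rank := by
    rw [hrankeq]
    exact aux_rank_two B hBsymm hBdiag hBne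
  -- ranks strictly decrease while nonzero
  set f : Module.End k (((Fin 3) ⊕ (Fin 3)) → k) := Matrix.mulVecLin N with hfdef
  have hpow : ∀ i : ℕ, Matrix.mulVecLin (N ^ i) = f ^ i := by
    intro i
    induction i with
    | zero => rw [pow_zero, pow_zero, Matrix.mulVecLin_one]; rfl
    | succ n ih => rw [pow_succ, pow_succ, Matrix.mulVecLin_mul, ih]; rfl
  have hrankf : ∀ i : ℕ, (N ^ i).rank = Module.finrank k (LinearMap.range (f ^ i)) := by
    intro i
    rw [Matrix.rank, hpow]
  have hf5 : f ^ 5 = 0 := by rw [← hpow, h5]; simp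
  have hstrict : ∀ i : ℕ, i ≤ 3 → (N ^ (i + 1)).rank < (N ^ i).rank := by
    intro i hi
    have hle : (N ^ (i + 1)).rank ≤ (N ^ i).rank := by
      rw [pow_succ]
      exact Matrix.rank_mul_le_left (N ^ i) N
    rcases lt_or_eq_of_le hle with h | h
    · exact h
    · exfalso
      have h' : Module.finrank k (LinearMap.range (f ^ (i + 1)))
          = Module.finrank k (LinearMap.range (f ^ i)) := by
        rw [← hrankf, ← hrankf, h]
      have h5r := aux_stab f i h' 5 (by omega)
      rw [hf5] at h5r
      have hzero : (N ^ i).rank = 0 := by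
        rw [hrankf, ← h5r]
        simp
      have h4le : (N ^ 4).rank ≤ (N ^ i).rank := by
        have h44 : N ^ 4 = N ^ i * N ^ (4 - i) := by rw [← pow_add]; congr 1; omega
        rw [h44]
        exact Matrix.rank_mul_le_left _ _
      omega
  have hF2 : (N ^ 4).rank + (N ^ 1).rank ≤ 6 := by
    have hmul : N ^ 4 * N ^ 1 = 0 := by rw [← pow_add]; exact h5
    have hc := Matrix.rank_add_rank_le_card_of_mul_eq_zero hmul
    simpa using hc
  have h1 : (N ^ 2).rank < (N ^ 1).rank := by simpa using hstrict 1 (by norm_num)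
  have h2 : (N ^ 3).rank < (N ^ 2).rank := by simpa using hstrict 2 (by norm_num)
  have h3 : (N ^ 4).rank < (N ^ 3).rank := by simpa using hstrict 3 (by norm_num)
  rw [hrankeq] at hF2 h3
  omega
end

section
/- Let p be a prime, let k be an algebraically closed field of characteristic p, and let G be a finite group whose Sylow p-subgroups have order exactly p. Let V be a finite-dimensional irreducible (simple) kG-module with dim_k V = p. Then every element g ∈ G of order p acts on V with a single Jordan block of size p; that is, (ρ(g) − 1)^(p−1) ≠ 0, where ρ : G → GL(V) is the action map. -/
/-!
Put `u = ρ(g) - 1` and suppose `u ^ (p - 1) = 0`, so that `u` has nilpotency class `r < p`.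
Choosing a rank-one `P` with `tr (P u ^ (r - 1)) = 1`, the telescoping sum
`β = ∑_{i + j = r - 1} u ^ i P u ^ j` commutes with `u`, hence with `⟨g⟩`, and has trace `r`.
Its relative trace `Tr_⟨g⟩^G β = ∑_{xH} ρ(x) β ρ(x)⁻¹` commutes with `G`, so by Schur's lemma it is
a scalar, and its trace is a multiple of `dim V = p`, i.e. zero in `k`. But that trace is also
`[G : ⟨g⟩] · r`, where `0 < r < p` and the index is prime to `p` because `⟨g⟩` is a Sylow
`p`-subgroup.
-/

open Finset Finset.Nat

theorem commute_sum_antidiagonal_pow_mul_pow {R : Type*} [Semiring R] {u : R} (P : R) {n : ℕ}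
    (hu : u ^ (n + 1) = 0) : Commute u (∑ ij ∈ antidiagonal n, u ^ ij.1 * P * u ^ ij.2) := by
  let f : ℕ × ℕ → R := fun ij => u ^ ij.1 * P * u ^ ij.2
  calc u * ∑ ij ∈ antidiagonal n, f ij
      = ∑ ij ∈ antidiagonal (n + 1), f ij := by
        simp [f, sum_antidiagonal_succ, hu, Finset.mul_sum, pow_succ', mul_assoc]
    _ = (∑ ij ∈ antidiagonal n, f ij) * u := by
        simp [f, sum_antidiagonal_succ', hu, Finset.sum_mul, pow_succ, mul_assoc]

theorem Module.End.exists_commute_trace_eq_of_pow_succ_eq_zero {K V : Type*} [Field K]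
    [AddCommGroup V] [Module K V] [FiniteDimensional K V] {u : End K V} {n : ℕ}
    (hn : u ^ n ≠ 0) (hn1 : u ^ (n + 1) = 0) :
    ∃ β : End K V, Commute u β ∧ LinearMap.trace K V β = n + 1 := by
  obtain ⟨v, hv⟩ : ∃ v, (u ^ n) v ≠ 0 := by
    by_contra! h
    exact hn (LinearMap.ext h)
  obtain ⟨l, hl⟩ := Projective.exists_dual_eq_one K hv
  let P : End K V := l.smulRight v
  have htrace : ∀ ij ∈ antidiagonal n, LinearMap.trace K V (u ^ ij.1 * P * u ^ ij.2) = 1 := by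
    intro ij hij
    have hPu : P * u ^ n = (l ∘ₗ u ^ n).smulRight v := rfl
    rw [LinearMap.trace_mul_comm, ← mul_assoc, ← pow_add, add_comm, mem_antidiagonal.mp hij,
      LinearMap.trace_mul_comm, hPu, LinearMap.trace_smulRight]
    exact hl
  refine ⟨_, commute_sum_antidiagonal_pow_mul_pow P hn1, ?_⟩
  rw [map_sum, sum_congr rfl htrace, sum_const, card_antidiagonal, nsmul_one, Nat.cast_succ]

namespace Representation

section RelTrace

variable {k G V : Type*} [CommRing k] [Group G] [AddCommGroup V] [Module k V]
  (ρ : Representation k G V) (H : Subgroup G)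

theorem conj_eq_of_mk_eq {β : Module.End k V} (hβ : ∀ h ∈ H, Commute (ρ h) β) {x y : G}
    (hxy : (x : G ⧸ H) = y) : ρ x * β * ρ x⁻¹ = ρ y * β * ρ y⁻¹ := by
  obtain ⟨h, hh, rfl⟩ : ∃ h ∈ H, y = x * h := ⟨x⁻¹ * y, QuotientGroup.eq.mp hxy, by group⟩
  rw [mul_inv_rev, map_mul, map_mul, mul_assoc (ρ x) (ρ h), (hβ h hh).eq]
  simp only [mul_assoc]
  rw [← mul_assoc (ρ h), ← map_mul, mul_inv_cancel, map_one, one_mul]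

/-- The relative trace `Tr_H^G β`; it is independent of the coset representatives when `β`
commutes with `ρ(H)`. -/
noncomputable def relTrace [Fintype (G ⧸ H)] (β : Module.End k V) : Module.End k V :=
  ∑ c : G ⧸ H, ρ c.out * β * ρ c.out⁻¹

variable [Fintype (G ⧸ H)]

theorem commute_relTrace {β : Module.End k V} (hβ : ∀ h ∈ H, Commute (ρ h) β) (x : G) :
    Commute (ρ x) (ρ.relTrace H β) := by
  have hconj : ρ x * ρ.relTrace H β * ρ x⁻¹ = ρ.relTrace H β := by
    rw [relTrace, Finset.mul_sum, Finset.sum_mul]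
    refine Fintype.sum_bijective (x • ·) (MulAction.bijective x) _ _ fun c => ?_
    have hmk : ((x * c.out : G) : G ⧸ H) = (x • c).out := by
      rw [QuotientGroup.out_eq', ← smul_eq_mul, MulAction.Quotient.mk_smul_out]
    rw [← conj_eq_of_mk_eq ρ H hβ hmk, mul_inv_rev, map_mul, map_mul]
    simp only [mul_assoc]
  calc ρ x * ρ.relTrace H β = ρ x * ρ.relTrace H β * ρ x⁻¹ * ρ x := by
        rw [mul_assoc _ (ρ x⁻¹), ← map_mul, inv_mul_cancel, map_one, mul_one]
    _ = ρ.relTrace H β * ρ x := by rw [hconj]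

theorem trace_relTrace [Module.Free k V] [Module.Finite k V] (β : Module.End k V) :
    LinearMap.trace k V (ρ.relTrace H β) = Fintype.card (G ⧸ H) • LinearMap.trace k V β := by
  rw [relTrace, map_sum, ← Finset.card_univ, ← Finset.sum_const]
  refine Finset.sum_congr rfl fun c _ => ?_
  rw [LinearMap.trace_mul_comm, ← mul_assoc, ← map_mul, inv_mul_cancel, map_one, one_mul]

end RelTrace

theorem exists_eq_algebraMap_of_forall_commute_ofModule' {k G V : Type*} [Field k]
    [IsAlgClosed k] [Monoid G] [AddCommGroup V] [Module k V] [Module (MonoidAlgebra k G) V]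
    [IsScalarTower k (MonoidAlgebra k G) V] [IsSimpleModule (MonoidAlgebra k G) V]
    [FiniteDimensional k V] {T : Module.End k V}
    (hT : ∀ g : G, Commute (ofModule' (k := k) (G := G) V g) T) :
    ∃ μ : k, T = algebraMap k _ μ := by
  let T' : Module.End (MonoidAlgebra k G) V :=
    { T with
      map_smul' := fun a v => by
        induction a using MonoidAlgebra.induction_on with
        | of g => exact (LinearMap.congr_fun (hT g) v).symm
        | add a b ha hb => simp_all [add_smul]
        | smul c a ha => simp_all [smul_assoc] }
  obtain ⟨μ, hμ⟩ := (IsSimpleModule.algebraMap_end_bijective_of_isAlgClosed k).2 T'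
  exact ⟨μ, LinearMap.ext fun v => (LinearMap.congr_fun hμ v).symm⟩

end Representation

theorem Sylow.not_dvd_index_of_card_eq {p : ℕ} [Fact p.Prime] {G : Type*} [Group G] [Finite G]
    (P : Sylow p G) {H : Subgroup G} (hH : Nat.card H = Nat.card P) : ¬ p ∣ H.index := by
  have hindex : H.index = (P : Subgroup G).index :=
    Nat.eq_of_mul_eq_mul_left Nat.card_pos <| by
      rw [H.card_mul_index, hH, Subgroup.card_mul_index]
  exact hindex ▸ P.not_dvd_index

/-- If `G` is a finite group with Sylow `p`-subgroups of order exactly `p`,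
`k` is algebraically closed of characteristic `p`, and `V` is a simple
`kG`-module of `k`-dimension `p`, then any element `g ∈ G` of order `p` acts
on `V` with a single Jordan block of size `p`: `(ρ(g) - 1)^(p-1) ≠ 0`. -/
theorem stmt_4 (p : ℕ) [Fact p.Prime]
    (k : Type*) [Field k] [IsAlgClosed k] [CharP k p]
    (G : Type*) [Group G] [Finite G]
    (hSyl : ∀ P : Sylow p G, Nat.card P = p)
    (V : Type*) [AddCommGroup V] [Module k V]
    [Module (MonoidAlgebra k G) V] [IsScalarTower k (MonoidAlgebra k G) V]
    [IsSimpleModule (MonoidAlgebra k G) V]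
    [FiniteDimensional k V] (hdim : Module.finrank k V = p)
    (g : G) (hg : orderOf g = p) :
    ∃ v : V, (((MonoidAlgebra.of k G g : MonoidAlgebra k G) - 1) ^ (p - 1)) • v ≠ 0 := by
  by_contra! hcon
  let ρ := Representation.ofModule' (k := k) (G := G) V
  set u := ρ g - 1
  have hu : u ^ (p - 1) = 0 := by
    have : u ^ (p - 1) = Algebra.lsmul k k V ((MonoidAlgebra.of k G g - 1) ^ (p - 1)) := by
      rw [map_pow, map_sub, map_one]; rfl
    exact this ▸ LinearMap.ext hcon
  have : Nontrivial V := IsSimpleModule.nontrivial (MonoidAlgebra k G) V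
  obtain ⟨n, hclass⟩ : ∃ n, nilpotencyClass u = n + 1 :=
    Nat.exists_eq_succ_of_ne_zero (pos_nilpotencyClass_iff.mpr ⟨_, hu⟩).ne'
  obtain ⟨hn1, hn⟩ := nilpotencyClass_eq_succ_iff.mp hclass
  have hnp : n + 1 ≤ p - 1 := hclass ▸ Nat.sInf_le hu
  obtain ⟨β, hβu, hβ⟩ := Module.End.exists_commute_trace_eq_of_pow_succ_eq_zero hn hn1
  let H := Subgroup.zpowers g
  have hβH : ∀ h ∈ H, Commute (ρ h) β := by
    have hβg : Commute (ρ g) β := by simpa [u] using hβu.add_left (Commute.one_left β)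
    rintro h hh
    obtain ⟨m, rfl⟩ := mem_powers_iff_mem_zpowers.mpr hh
    exact map_pow ρ g m ▸ hβg.pow_left m
  let : Fintype (G ⧸ H) := Fintype.ofFinite _
  obtain ⟨μ, hμ⟩ := Representation.exists_eq_algebraMap_of_forall_commute_ofModule'
    (ρ.commute_relTrace H hβH)
  have htrace := ρ.trace_relTrace H β
  rw [hμ, hβ, Module.algebraMap_end_eq_smul_id, map_smul, LinearMap.trace_id, hdim] at htrace
  have hindex : ¬ p ∣ H.index :=
    (default : Sylow p G).not_dvd_index_of_card_eq (by rw [hSyl, Nat.card_zpowers, hg])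
  have hcast : ((H.index * (n + 1) : ℕ) : k) = 0 := by
    rw [H.index_eq_card, Nat.card_eq_fintype_card, Nat.cast_mul, ← nsmul_eq_mul, Nat.cast_succ,
      ← htrace, CharP.cast_eq_zero, smul_zero]
  rcases (Nat.Prime.dvd_mul Fact.out).mp ((CharP.cast_eq_zero_iff k p _).mp hcast) with h | h
  · exact hindex h
  · have := Nat.le_of_dvd n.succ_pos h
    omega
end
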